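/- arXiv:1908.01933 — 4 statements merged into one kernel-verified Lean document; each statement's English description precedes it below -/
import Mathlib

section
/- Let R be a discrete valuation ring containing a field k, with uniformizer t. Let M be a finitely generated free R-module and let u_1, ..., u_n be elements of M, not all zero. For u in M define v(u) to be the largest natural number s such that u lies in t^s·M (with v(0) = ∞). Then the length (as an R-module) of the torsion submodule of the quotient M/⟨u_1, ..., u_n⟩ is at least min_i v(u_i). -/
/-- The length of a module, defined as the Krull dimension of its lattice of
submodules (i.e. the supremum of the lengths of strictly increasing chains of
submodules). -/
noncomputable def moduleLength (R M : Type*) [CommRing R] [AddCommGroup M]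
    [Module R M] : WithBot ℕ∞ :=
  Order.krullDim (Submodule R M)

/-!
Let `s = min v(uᵢ)`, finite by Krull's intersection theorem, and write `uᵢ = tˢ wᵢ`. With
`W = ⟨w₁, …, wₙ⟩` we get `⟨u₁, …, uₙ⟩ = tˢ W`, so the images of `W ⊇ t W ⊇ ⋯ ⊇ tˢ W` form a
chain in the torsion of `M ⧸ ⟨u₁, …, uₙ⟩`, killed by `tˢ`. The chain is strict: an equality
`tᵃ W = tᵃ⁺¹ W` with `a < s` would give `tˢ W = tˢ⁺¹ W`, putting a `uᵢ` with `v(uᵢ) = s`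
into `tˢ⁺¹ M`.
-/

open Order Pointwise Submodule

lemma Order.le_krullDim_of_strictAnti {α : Type*} [Preorder α] {s : ℕ} {f : Fin (s + 1) → α}
    (hf : StrictAnti f) : (s : WithBot ℕ∞) ≤ krullDim α := by
  rw [← krullDim_orderDual]
  exact (LTSeries.mk s (OrderDual.toDual ∘ f) hf.dual_right).length_le_krullDim

namespace Submodule

variable {R M : Type*} [CommRing R] [AddCommGroup M] [Module R M]

lemma comap_subtype_lt_comap_subtype {T p q : Submodule R M} (hq : q ≤ T) (hpq : p < q) :
    p.comap T.subtype < q.comap T.subtype := by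
  refine lt_of_le_of_ne (comap_mono hpq.le) fun h => hpq.ne ?_
  simpa [map_comap_subtype, inf_eq_right.2 hq, inf_eq_right.2 (hpq.le.trans hq)] using
    congrArg (map T.subtype) h

lemma map_mkQ_lt_map_mkQ {N p q : Submodule R M} (hN : N ≤ p) (hpq : p < q) :
    p.map N.mkQ < q.map N.mkQ :=
  map_lt_map_of_le_of_sup_lt_sup hpq.le <| by
    rwa [ker_mkQ, sup_eq_left.2 hN, sup_eq_left.2 (hN.trans hpq.le)]

lemma le_krullDim_of_strictAnti_of_le_map_mkQ {N : Submodule R M} {T : Submodule R (M ⧸ N)}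
    {s : ℕ} {P : Fin (s + 1) → Submodule R M} (hP : StrictAnti P) (hN : N ≤ P (Fin.last s))
    (hT : (P 0).map N.mkQ ≤ T) : (s : WithBot ℕ∞) ≤ krullDim (Submodule R T) :=
  le_krullDim_of_strictAnti (f := fun a => ((P a).map N.mkQ).comap T.subtype) fun a b hab =>
    comap_subtype_lt_comap_subtype ((map_mono (hP.antitone (Fin.zero_le a))).trans hT)
      (map_mkQ_lt_map_mkQ (hN.trans (hP.antitone (Fin.le_last b))) (hP hab))

lemma map_mkQ_le_torsion_of_smul_le {N W : Submodule R M} {r : R} (hr : r ∈ nonZeroDivisors R)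
    (hW : r • W ≤ N) : W.map N.mkQ ≤ torsion R (M ⧸ N) := by
  rintro _ ⟨x, hx, rfl⟩
  refine (mem_torsion_iff _).2 ⟨⟨r, hr⟩, ?_⟩
  rw [Submonoid.mk_smul, ← map_smul, mkQ_apply, Quotient.mk_eq_zero]
  exact hW (smul_mem_pointwise_smul x r W hx)

lemma pow_succ_smul_le (t : R) (W : Submodule R M) (a : ℕ) : t ^ (a + 1) • W ≤ t ^ a • W := by
  rw [pow_succ', mul_smul]
  exact smul_le_self_of_tower t _

/-- Multiplying an inclusion `t ^ a • W ≤ t ^ (a + 1) • W` by `t ^ (s - a)` gives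
`t ^ s • W ≤ t ^ (s + 1) • W`. -/
lemma strictAnti_pow_smul {t : R} {W : Submodule R M} {s : ℕ}
    (h : ¬t ^ s • W ≤ t ^ (s + 1) • W) : StrictAnti fun a : Fin (s + 1) => t ^ (a : ℕ) • W := by
  refine Fin.strictAnti_iff_succ_lt.2 fun a => lt_of_le_not_ge (pow_succ_smul_le t W a) ?_
  intro hle
  have key := smul_le_smul_left (t ^ (s - a)) hle
  simp only [Fin.val_succ, Fin.val_castSucc, ← mul_smul, ← pow_add] at key
  rw [Nat.sub_add_cancel a.is_lt.le, show s - a + (a + 1) = s + 1 by omega] at key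
  exact h key

lemma exists_notMem_pow_smul_top [IsNoetherianRing R] [IsLocalRing R] [Module.Finite R M]
    {t : R} (ht : ¬IsUnit t) {m : M} (hm : m ≠ 0) : ∃ s : ℕ, m ∉ t ^ s • (⊤ : Submodule R M) := by
  by_contra! h
  have hkrull := Ideal.iInf_pow_smul_eq_bot_of_isLocalRing (M := M) (Ideal.span {t})
    (by rwa [Ne, Ideal.span_singleton_eq_top])
  refine hm ((mem_bot R).1 (hkrull ▸ mem_iInf _ |>.2 fun s => ?_))
  rw [Ideal.span_singleton_pow, ideal_span_singleton_smul]
  exact h s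

end Submodule

theorem stmt_0_general {R M : Type*} [CommRing R] [IsDomain R]
    [IsDiscreteValuationRing R]
    [AddCommGroup M] [Module R M] [Module.Finite R M]
    (t : R) (ht : Irreducible t)
    {n : ℕ} (u : Fin n → M) (hu : ∃ i, u i ≠ 0)
    (v : M → ℕ∞)
    (hv : ∀ (m : M) (s : ℕ), (s : ℕ∞) ≤ v m ↔ ∃ m' : M, m = t ^ s • m') :
    ((⨅ i, v (u i) : ℕ∞) : WithBot ℕ∞) ≤
      moduleLength R
        (Submodule.torsion R (M ⧸ Submodule.span R (Set.range u))) := by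
  have hv_mem (m : M) (s : ℕ) : (s : ℕ∞) ≤ v m ↔ m ∈ t ^ s • (⊤ : Submodule R M) := by
    simp [hv, mem_smul_pointwise_iff_exists, eq_comm]
  obtain ⟨j, hj⟩ := hu
  have : Nonempty (Fin n) := ⟨j⟩
  obtain ⟨i₀, hi₀⟩ := ciInf_mem fun i => v (u i)
  obtain ⟨s', hs'⟩ := exists_notMem_pow_smul_top ht.not_isUnit hj
  obtain ⟨s, hs⟩ := ENat.ne_top_iff_exists.1
    ((iInf_le (fun i => v (u i)) j).trans_lt (not_le.1 ((hv_mem _ _).not.2 hs'))).ne_top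
  have hsle (i : Fin n) : (s : ℕ∞) ≤ v (u i) := hs ▸ iInf_le (fun i => v (u i)) i
  choose w hw using fun i => (hv (u i) s).1 (hsle i)
  set W := span R (Set.range w)
  have hN : span R (Set.range u) = t ^ s • W := by
    rw [smul_span, ← Set.range_smul]
    exact congrArg _ (congrArg _ (funext hw))
  have hstrict : ¬t ^ s • W ≤ t ^ (s + 1) • W := fun h => by
    have hmem : u i₀ ∈ t ^ (s + 1) • (⊤ : Submodule R M) :=
      smul_le_smul_left (t ^ (s + 1)) (le_top : W ≤ ⊤) (h (hN ▸ subset_span ⟨i₀, rfl⟩))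
    have hs1 := (hv_mem _ _).2 hmem
    rw [show v (u i₀) = s from hi₀.trans hs.symm, Nat.cast_le] at hs1
    omega
  rw [← hs]
  refine le_krullDim_of_strictAnti_of_le_map_mkQ (strictAnti_pow_smul hstrict) hN.le ?_
  simpa using map_mkQ_le_torsion_of_smul_le
    (pow_mem (mem_nonZeroDivisors_of_ne_zero ht.ne_zero) s) hN.ge

/-- Lemma 5.6(1): Let `R` be a discrete valuation ring containing a field `k`,
with uniformizer `t`, let `M` be a finitely generated free `R`-module and
`u 1, ..., u n ∈ M` not all zero.  For `u ∈ M` let `v u` be the largest natural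
number `s` with `u ∈ t^s · M` (with `v 0 = ∞`); this is encoded by the
characterization `hv`.  Then the length of the torsion submodule of
`M ⧸ ⟨u 1, ..., u n⟩` is at least `min_i v (u i)`. -/
theorem stmt_0 {k R M : Type*} [Field k] [CommRing R] [IsDomain R]
    [IsDiscreteValuationRing R] [Algebra k R]
    [AddCommGroup M] [Module R M] [Module.Free R M] [Module.Finite R M]
    (t : R) (ht : Irreducible t)
    {n : ℕ} (u : Fin n → M) (hu : ∃ i, u i ≠ 0)
    (v : M → ℕ∞)
    (hv : ∀ (m : M) (s : ℕ), (s : ℕ∞) ≤ v m ↔ ∃ m' : M, m = t ^ s • m') :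
    ((⨅ i, v (u i) : ℕ∞) : WithBot ℕ∞) ≤
      moduleLength R
        (Submodule.torsion R (M ⧸ Submodule.span R (Set.range u))) :=
  stmt_0_general t ht u hu v hv
end

section
/- Let (R, m) be a regular local ring, let a be an element of m, and let b be an element of m that does not lie in m². Then the quotient ring S = R[X]/(X² + aX + b) is a regular local ring. -/
/-!
The polynomial `X² + aX + b` is monic and Eisenstein at `m`, and the argument works for any
such `f` of positive degree `n`. `S = R[X]/(f)` is free over `R`, hence faithfully flat, so going down
lifts chains of primes and `dim R ≤ dim S`. Since `f ≡ Xⁿ mod m`, every maximal ideal of `S`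
contains `m` and the root `x`, so `S` is local with maximal ideal `mS + xS`. As `b = f(0)` lies
in `m \ m²`, it is part of a minimal system of `dim R` generators of `m`, and `b ∈ xS`; replacing
`b` by `x` gives `dim R` generators of the maximal ideal of `S`.
-/

/-- A commutative ring is a regular local ring if it is a Noetherian local ring
whose Krull dimension equals the dimension of its cotangent space `m/m²` as a
vector space over the residue field (equivalently, the maximal ideal is
generated by `dim R` elements). -/
class IsRegularLocalRing' (R : Type*) [CommRing R] extends
    IsLocalRing R, IsNoetherianRing R : Prop where
  regular : ringKrullDim R =
    Module.finrank (IsLocalRing.ResidueField R) (IsLocalRing.CotangentSpace R)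

open Polynomial IsLocalRing

theorem ringKrullDim_le_of_faithfullyFlat (R S : Type*) [CommRing R] [CommRing S] [Algebra R S]
    [Module.FaithfullyFlat R S] : ringKrullDim R ≤ ringKrullDim S := by
  refine iSup_le fun l => ?_
  obtain ⟨P, _, _⟩ := Ideal.exists_isPrime_liesOver_of_faithfullyFlat (B := S) l.last.asIdeal
  obtain ⟨L, hL, -, -⟩ := Ideal.exists_ltSeries_of_hasGoingDown l P
  rw [← hL]
  exact Order.LTSeries.length_le_krullDim L

theorem isRegularLocalRing'_iff (R : Type*) [CommRing R] :
    IsRegularLocalRing' R ↔ IsRegularLocalRing R :=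
  ⟨fun h => (IsRegularLocalRing.iff_finrank_cotangentSpace R).mpr h.regular.symm,
    fun h => ⟨((IsRegularLocalRing.iff_finrank_cotangentSpace R).mp h).symm⟩⟩

namespace IsLocalRing

variable {R : Type*} [CommRing R] [IsLocalRing R] [IsNoetherianRing R]

theorem exists_span_insert_eq_maximalIdeal {b : R} (hb : b ∈ maximalIdeal R)
    (hb2 : b ∉ maximalIdeal R ^ 2) :
    ∃ G : Set R, G.Finite ∧ G.ncard + 1 ≤ (maximalIdeal R).spanFinrank ∧
      Ideal.span (insert b G) = maximalIdeal R := by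
  set β := (maximalIdeal R).toCotangent ⟨b, hb⟩
  have hβ : β ≠ 0 := by rwa [Ne, Ideal.toCotangent_eq_zero]
  obtain ⟨q, hq⟩ := (ResidueField R ∙ β).exists_isCompl
  have hdim := Submodule.finrank_add_eq_of_isCompl hq
  rw [finrank_span_singleton hβ] at hdim
  -- `b` together with lifts of a basis of a complement `q` of `b̄` spans `m/m²`; apply Nakayama.
  let B := Module.finBasis (ResidueField R) q
  choose y hy using fun i => (maximalIdeal R).toCotangent_surjective (B i)
  have hspan : Submodule.span R (insert ⟨b, hb⟩ (Set.range y)) = ⊤ := by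
    rw [← CotangentSpace.span_image_eq_top_iff, Set.image_insert_eq, ← Set.range_comp,
      Submodule.span_insert]
    have : (maximalIdeal R).toCotangent ∘ y = q.subtype ∘ B := funext hy
    rw [this, Set.range_comp, ← Submodule.map_span, B.span_eq, Submodule.map_top,
      Submodule.range_subtype, hq.sup_eq_top]
  refine ⟨(↑) '' Set.range y, (Set.finite_range y).image _, ?_, ?_⟩
  · rw [spanFinrank_maximalIdeal_eq_finrank_cotangentSpace, ← hdim, add_comm, ← Set.image_univ,
      ← Set.image_comp]
    gcongr
    exact (Set.ncard_image_le Set.finite_univ).trans (by simp [Set.ncard_univ])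
  · calc Ideal.span (insert b ((↑) '' Set.range y))
        = Submodule.span R ((maximalIdeal R).subtype '' insert ⟨b, hb⟩ (Set.range y)) := by
          rw [Set.image_insert_eq]; rfl
      _ = maximalIdeal R := by
          rw [← Submodule.map_span, hspan, Submodule.map_top, Submodule.range_subtype]

end IsLocalRing

namespace AdjoinRoot

variable {R : Type*} [CommRing R] [IsLocalRing R] {f : R[X]}

theorem isMaximal_map_maximalIdeal_sup_span_root (hf0 : f.coeff 0 ∈ maximalIdeal R) :
    ((maximalIdeal R).map (of f) ⊔ Ideal.span {root f}).IsMaximal := by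
  have hφ : f.eval₂ (residue R) 0 = 0 := by rwa [eval₂_at_zero, residue_eq_zero_iff]
  let φ := lift (residue R) 0 hφ
  have hker : RingHom.ker φ = (maximalIdeal R).map (of f) ⊔ Ideal.span {root f} := by
    refine le_antisymm (fun s hs => ?_) (sup_le ?_ ?_)
    · obtain ⟨p, rfl⟩ := mk_surjective s
      have hp : p.coeff 0 ∈ maximalIdeal R := by
        rwa [RingHom.mem_ker, lift_mk, eval₂_at_zero, residue_eq_zero_iff] at hs
      rw [← X_mul_divX_add p, map_add, map_mul, mk_X, mk_C]
      exact add_mem (Ideal.mem_sup_right (Ideal.mul_mem_right _ _ (Ideal.mem_span_singleton_self _)))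
        (Ideal.mem_sup_left (Ideal.mem_map_of_mem _ hp))
    · rw [Ideal.map_le_iff_le_comap]
      intro c hc
      simpa [φ, residue_eq_zero_iff] using hc
    · rw [Ideal.span_le, Set.singleton_subset_iff]
      simp [φ]
  rw [← hker]
  refine RingHom.ker_isMaximal_of_surjective φ fun x => ?_
  obtain ⟨c, rfl⟩ := residue_surjective x
  exact ⟨of f c, by simp [φ]⟩

theorem map_maximalIdeal_sup_span_root_le (hm : f.Monic)
    (hf : f.IsWeaklyEisensteinAt (maximalIdeal R)) (Q : Ideal (AdjoinRoot f)) [Q.IsMaximal] :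
    (maximalIdeal R).map (of f) ⊔ Ideal.span {root f} ≤ Q := by
  have := hm.finite_adjoinRoot
  have hmQ : (maximalIdeal R).map (of f) ≤ Q := by
    rw [Ideal.map_le_iff_le_comap, ← algebraMap_eq,
      eq_maximalIdeal (Ideal.isMaximal_comap_of_isIntegral_of_isMaximal Q)]
  refine sup_le hmQ ?_
  rw [Ideal.span_le, Set.singleton_subset_iff]
  have h : aeval (root f) (X ^ f.natDegree + ∑ i ∈ Finset.range f.natDegree,
      C (f.coeff i) * X ^ i) = 0 := by rw [← hm.as_sum, aeval_eq, mk_self]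
  simp only [map_add, map_pow, aeval_X, map_sum, map_mul, aeval_C, algebraMap_eq] at h
  have hpow : root f ^ f.natDegree ∈ Q := by
    rw [eq_neg_of_add_eq_zero_left h]
    exact neg_mem (sum_mem fun i hi => Ideal.mul_mem_right _ _
      (hmQ (Ideal.mem_map_of_mem _ (hf.mem (Finset.mem_range.mp hi)))))
  exact Ideal.IsPrime.mem_of_pow_mem inferInstance _ hpow

theorem isLocalRing (hm : f.Monic) (hf : f.IsWeaklyEisensteinAt (maximalIdeal R))
    (hdeg : 0 < f.natDegree) : IsLocalRing (AdjoinRoot f) :=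
  have hJ := isMaximal_map_maximalIdeal_sup_span_root (hf.mem hdeg)
  .of_unique_max_ideal ⟨_, hJ, fun Q _ =>
    (hJ.eq_of_le Ideal.IsPrime.ne_top' (map_maximalIdeal_sup_span_root_le hm hf Q)).symm⟩

theorem maximalIdeal_eq [IsLocalRing (AdjoinRoot f)] (hf0 : f.coeff 0 ∈ maximalIdeal R) :
    maximalIdeal (AdjoinRoot f) = (maximalIdeal R).map (of f) ⊔ Ideal.span {root f} :=
  (eq_maximalIdeal (isMaximal_map_maximalIdeal_sup_span_root hf0)).symm

omit [IsLocalRing R] in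
theorem of_coeff_zero_mem_span_root : of f (f.coeff 0) ∈ Ideal.span {root f} := by
  have h : mk f (X * f.divX + C (f.coeff 0)) = 0 := by rw [X_mul_divX_add, mk_self]
  rw [map_add, map_mul, mk_X, mk_C] at h
  exact Ideal.mem_span_singleton'.mpr ⟨-mk f f.divX, by linear_combination -h⟩

theorem spanFinrank_maximalIdeal_le [IsNoetherianRing R] [IsLocalRing (AdjoinRoot f)]
    (hf0 : f.coeff 0 ∈ maximalIdeal R) (hf0' : f.coeff 0 ∉ maximalIdeal R ^ 2) :
    (maximalIdeal (AdjoinRoot f)).spanFinrank ≤ (maximalIdeal R).spanFinrank := by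
  obtain ⟨G, hG, hcard, hspan⟩ := exists_span_insert_eq_maximalIdeal hf0 hf0'
  have hgen : maximalIdeal (AdjoinRoot f) = Ideal.span (insert (root f) (of f '' G)) := by
    rw [maximalIdeal_eq hf0, ← hspan, Ideal.map_span, Set.image_insert_eq, Ideal.span_insert,
      Ideal.span_insert, sup_comm (Ideal.span {root f}), sup_assoc,
      sup_eq_right.mpr (le_sup_of_le_right
        ((Ideal.span_singleton_le_iff_mem _).mpr of_coeff_zero_mem_span_root))]
  calc (maximalIdeal (AdjoinRoot f)).spanFinrank
      ≤ (insert (root f) (of f '' G)).ncard := by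
        rw [hgen]; exact Submodule.spanFinrank_span_le_ncard_of_finite ((hG.image _).insert _)
    _ ≤ G.ncard + 1 := (Set.ncard_insert_le _ _).trans (by gcongr; exact Set.ncard_image_le hG)
    _ ≤ (maximalIdeal R).spanFinrank := hcard

end AdjoinRoot

theorem AdjoinRoot.isRegularLocalRing_of_isEisensteinAt {R : Type*} [CommRing R]
    [IsRegularLocalRing R] {f : R[X]} (hm : f.Monic) (hf : f.IsEisensteinAt (maximalIdeal R))
    (hdeg : 0 < f.natDegree) : IsRegularLocalRing (AdjoinRoot f) := by
  have := isLocalRing hm hf.isWeaklyEisensteinAt hdeg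
  have := hm.free_adjoinRoot
  apply IsRegularLocalRing.of_spanFinrank_maximalIdeal_le
  calc ((maximalIdeal (AdjoinRoot f)).spanFinrank : WithBot ℕ∞)
      ≤ (maximalIdeal R).spanFinrank := by
        exact_mod_cast spanFinrank_maximalIdeal_le (hf.mem hdeg) hf.notMem
    _ = ringKrullDim R := IsRegularLocalRing.spanFinrank_maximalIdeal
    _ ≤ ringKrullDim (AdjoinRoot f) := ringKrullDim_le_of_faithfullyFlat R _

/-- The local statement underlying Proposition 7.4(2): if `(R, m)` is a regular
local ring, `a ∈ m` and `b ∈ m \ m²`, then `S = R[X]/(X² + aX + b)` is a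
regular local ring. -/
theorem stmt_4 {R : Type*} [CommRing R] [IsRegularLocalRing' R]
    (a b : R) (ha : a ∈ IsLocalRing.maximalIdeal R)
    (hb : b ∈ IsLocalRing.maximalIdeal R)
    (hb2 : b ∉ (IsLocalRing.maximalIdeal R) ^ 2) :
    IsRegularLocalRing' (Polynomial R ⧸
      Ideal.span {Polynomial.X ^ 2 + Polynomial.C a * Polynomial.X +
        Polynomial.C b}) := by
  have := (isRegularLocalRing'_iff R).mp ‹_›
  have hm : (X ^ 2 + C a * X + C b).Monic := by monicity!
  have hdeg : (X ^ 2 + C a * X + C b).natDegree = 2 := by compute_degree!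
  have hf : (X ^ 2 + C a * X + C b).IsEisensteinAt (maximalIdeal R) :=
    { leading := by rw [hm.leadingCoeff]; simp
      mem := fun {n} hn => by
        rw [hdeg] at hn
        interval_cases n <;> simpa
      notMem := by simpa }
  exact (isRegularLocalRing'_iff _).mpr
    (AdjoinRoot.isRegularLocalRing_of_isEisensteinAt hm hf (by omega))
end

section
/- Let k be a commutative ring, A a commutative k-algebra, and f_1, ..., f_r elements of A. Let P = k[t_1, ..., t_r] be the polynomial ring, and let B = A[t_1, ..., t_r]/(1 + t_1·f_1 + ⋯ + t_r·f_r), regarded as a P-algebra via the variables t_i. Then the module of relative Kähler differentials Ω_{B/P} is isomorphic as a B-module to the quotient of Ω_{A/k} ⊗_A B by the B-submodule generated by the single element Σ_{i=1}^{r} t_i·(df_i ⊗ 1). -/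
/-!
Over `P = k[t]` the polynomial ring `A[t]` is the base change of `A` along `k → P`, so
`Ω[A[t]⁄P] ≅ A[t] ⊗[A] Ω[A⁄k]`. For the hypersurface `B = A[t]/(g)` the conormal sequence
`(g)/(g²) → B ⊗[A[t]] Ω[A[t]⁄P] → Ω[B⁄P] → 0` is exact and the image of its first map
is spanned by `1 ⊗ dg`. The `t i` are constants over `P`, so `dg = Σ i, t i • d(f i)`.
-/

open TensorProduct

namespace KaehlerDifferential

section Hypersurface

variable {R S B : Type*} [CommRing R] [CommRing S] [Algebra R S] [CommRing B] [Algebra R B]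
  [Algebra S B] [IsScalarTower R S B]

theorem ker_mapBaseChange_eq_span_D (hsurj : Function.Surjective (algebraMap S B)) {g : S}
    (hg : RingHom.ker (algebraMap S B) = Ideal.span {g}) :
    LinearMap.ker (mapBaseChange R S B) = Submodule.span B {(1 : B) ⊗ₜ[S] D R S g} := by
  have hg0 : algebraMap S B g = 0 := by
    rw [← RingHom.mem_ker, hg]; exact Ideal.mem_span_singleton_self g
  apply le_antisymm
  · intro x hx
    obtain ⟨y, rfl⟩ : x ∈ LinearMap.range (kerCotangentToTensor R S B) := by
      rwa [range_kerCotangentToTensor R S B hsurj]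
    obtain ⟨⟨w, hw⟩, rfl⟩ := Ideal.toCotangent_surjective _ y
    rw [hg] at hw
    obtain ⟨s, rfl⟩ := Ideal.mem_span_singleton'.mp hw
    -- `d(s g) = s dg + g ds`, and `g` acts as zero on `B ⊗[S] Ω[S⁄R]`
    have : (1 : B) ⊗ₜ[S] D R S (s * g) = algebraMap S B s • (1 ⊗ₜ D R S g) := by
      rw [Derivation.leibniz, tmul_add, ← smul_tmul, ← smul_tmul, Algebra.smul_def g,
        Algebra.smul_def s, hg0, mul_one, zero_mul, zero_tmul, add_zero, smul_tmul',
        smul_eq_mul, mul_one]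
    rw [kerCotangentToTensor_toCotangent, this]
    exact Submodule.smul_mem _ _ (Submodule.mem_span_singleton_self _)
  · rw [Submodule.span_le, Set.singleton_subset_iff, SetLike.mem_coe, LinearMap.mem_ker,
      mapBaseChange_tmul, one_smul, map_D, hg0, map_zero]

noncomputable def equivQuotSpanD (hsurj : Function.Surjective (algebraMap S B)) {g : S}
    (hg : RingHom.ker (algebraMap S B) = Ideal.span {g}) :
    Ω[B⁄R] ≃ₗ[B] (B ⊗[S] Ω[S⁄R]) ⧸ Submodule.span B {(1 : B) ⊗ₜ[S] D R S g} :=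
  (LinearMap.quotKerEquivOfSurjective _ (mapBaseChange_surjective R S B hsurj)).symm.trans
    (Submodule.quotEquivOfEq _ _ (ker_mapBaseChange_eq_span_D hsurj hg))

end Hypersurface

section PushoutHypersurface

variable {R S A B C : Type*} [CommRing R] [CommRing S] [Algebra R S] [CommRing A] [Algebra R A]
  [CommRing B] [Algebra R B] [Algebra A B] [Algebra S B] [IsScalarTower R A B]
  [IsScalarTower R S B] [Algebra.IsPushout R S A B]
  [CommRing C] [Algebra A C] [Algebra S C] [Algebra B C] [IsScalarTower A B C]
  [IsScalarTower S B C]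

noncomputable def equivQuotSpanDOfIsPushout (hsurj : Function.Surjective (algebraMap B C)) {g : B}
    (hg : RingHom.ker (algebraMap B C) = Ideal.span {g}) :
    Ω[C⁄S] ≃ₗ[C] (C ⊗[A] Ω[A⁄R]) ⧸ Submodule.span C
      {AlgebraTensorModule.cancelBaseChange A B C C Ω[A⁄R]
        ((1 : C) ⊗ₜ[B] (tensorKaehlerEquiv R S A B).symm (D S B g))} :=
  let e : C ⊗[B] Ω[B⁄S] ≃ₗ[C] C ⊗[A] Ω[A⁄R] :=
    (AlgebraTensorModule.congr (.refl C C) (tensorKaehlerEquiv R S A B).symm).trans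
      (AlgebraTensorModule.cancelBaseChange A B C C Ω[A⁄R])
  (equivQuotSpanD hsurj hg).trans (Submodule.Quotient.equiv _ _ e
    (by rw [Submodule.map_span, Set.image_singleton]; rfl))

end PushoutHypersurface

end KaehlerDifferential

namespace MvPolynomial

attribute [local instance] algebraMvPolynomial

open KaehlerDifferential

variable {σ k A : Type*} [CommRing k] [CommRing A] [Algebra k A]

theorem tensorKaehlerEquiv_symm_D_X_mul_C (i : σ) (a : A) :
    (tensorKaehlerEquiv k (MvPolynomial σ k) A (MvPolynomial σ A)).symm
      (D (MvPolynomial σ k) (MvPolynomial σ A) (X i * C a)) = X i ⊗ₜ D k A a := by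
  rw [LinearEquiv.symm_apply_eq, tensorKaehlerEquiv_tmul_D, Derivation.leibniz,
    ← map_X (algebraMap k A), ← algebraMap_def, Derivation.map_algebraMap, smul_zero, add_zero]
  rfl

theorem tensorKaehlerEquiv_symm_D_one_add_sum_X_mul_C (s : Finset σ) (f : σ → A) :
    (tensorKaehlerEquiv k (MvPolynomial σ k) A (MvPolynomial σ A)).symm
      (D (MvPolynomial σ k) (MvPolynomial σ A) (1 + ∑ i ∈ s, X i * C (f i))) =
      ∑ i ∈ s, X i ⊗ₜ D k A (f i) := by
  simp only [map_add, Derivation.map_one_eq_zero, zero_add, map_sum,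
    tensorKaehlerEquiv_symm_D_X_mul_C]

end MvPolynomial

open KaehlerDifferential MvPolynomial

/-- The key computation in the proof of the Bertini-type Theorem 2.1: for a
commutative `k`-algebra `A`, elements `f 1, ..., f r ∈ A`,
`P = k[t 1, ..., t r]` and `B = A[t 1, ..., t r]/(1 + t 1·f 1 + ⋯ + t r·f r)`
(a `P`-algebra via the variables `t i`), the module of relative Kähler
differentials `Ω[B⁄P]` is isomorphic, as a `B`-module, to the quotient of
`Ω[A⁄k] ⊗[A] B` (written here as the base change `B ⊗[A] Ω[A⁄k]`) by the
`B`-submodule generated by the single element `Σ i, t i • (1 ⊗ d(f i))`. -/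
theorem stmt_5 (k A : Type*) [CommRing k] [CommRing A] [Algebra k A]
    (r : ℕ) (f : Fin r → A) :
    letI P := MvPolynomial (Fin r) k
    letI I : Ideal (MvPolynomial (Fin r) A) :=
      Ideal.span {1 + ∑ i, MvPolynomial.X i * MvPolynomial.C (f i)}
    letI B := MvPolynomial (Fin r) A ⧸ I
    letI : Algebra P B :=
      ((Ideal.Quotient.mk I).comp
        (MvPolynomial.map (algebraMap k A))).toAlgebra
    Nonempty (Ω[B⁄P] ≃ₗ[B]
      (B ⊗[A] Ω[A⁄k] ⧸
        Submodule.span B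
          {∑ i, Ideal.Quotient.mk I (MvPolynomial.X i) •
            ((1 : B) ⊗ₜ[A] (KaehlerDifferential.D k A) (f i))})) := by
  set S := MvPolynomial (Fin r) A
  set I : Ideal S := Ideal.span {1 + ∑ i, X i * C (f i)}
  let : Algebra (MvPolynomial (Fin r) k) S := algebraMvPolynomial
  let : Algebra (MvPolynomial (Fin r) k) (S ⧸ I) :=
    ((Ideal.Quotient.mk I).comp (map (algebraMap k A))).toAlgebra
  have := IsScalarTower.of_algebraMap_eq' (R := MvPolynomial (Fin r) k) (S := S) (A := S ⧸ I) rfl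
  have hsurj : Function.Surjective (algebraMap S (S ⧸ I)) := Ideal.Quotient.mk_surjective
  have hker : RingHom.ker (algebraMap S (S ⧸ I)) = I := Ideal.mk_ker
  have hgen : AlgebraTensorModule.cancelBaseChange A S (S ⧸ I) (S ⧸ I) Ω[A⁄k]
      ((1 : S ⧸ I) ⊗ₜ (tensorKaehlerEquiv k (MvPolynomial (Fin r) k) A S).symm
        (D (MvPolynomial (Fin r) k) S (1 + ∑ i, X i * C (f i)))) =
      ∑ i, Ideal.Quotient.mk I (X i) • ((1 : S ⧸ I) ⊗ₜ[A] D k A (f i)) := by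
    rw [tensorKaehlerEquiv_symm_D_one_add_sum_X_mul_C, tmul_sum, map_sum]
    refine Finset.sum_congr rfl fun i _ => ?_
    rw [AlgebraTensorModule.cancelBaseChange_tmul, smul_tmul', smul_eq_mul, mul_one]
    exact congrArg (· ⊗ₜ[A] _) (Algebra.algebraMap_eq_smul_one _).symm
  exact ⟨(equivQuotSpanDOfIsPushout (R := k) hsurj hker).trans
    (Submodule.quotEquivOfEq _ _ (by rw [hgen]))⟩
end

section
/- Let R be a local domain with fraction field F whose maximal ideal m is generated by two elements x and y, with y ≠ 0. Let R' = R[x/y] be the R-subalgebra of F generated by x/y. If a ∈ m and b ∈ m², then a/y ∈ R' and b/y² ∈ R'. Consequently, for any domain extension of F containing an element z with z² + a·z + b = 0, the element z/y is integral over R', being a root of the monic polynomial T² + (a/y)·T + (b/y²) with coefficients in R'. -/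
/-- The local-algebra content of Lemma 6.2: let `R` be a local domain with
fraction field `F`, whose maximal ideal is generated by `x` and `y` with
`y ≠ 0`, and let `R' = R[x/y] ⊆ F`.  If `a ∈ m` and `b ∈ m²`, then
`a/y ∈ R'` and `b/y² ∈ R'`; consequently, for any domain extension `E` of `F`
containing an element `z` with `z² + a·z + b = 0`, the element `z/y` is a root
of the monic polynomial `T² + (a/y)·T + (b/y²)` with coefficients in `R'`, and
is integral over `R'`. -/
theorem stmt_6 {R : Type*} [CommRing R] [IsDomain R] [IsLocalRing R]
    (F : Type*) [Field F] [Algebra R F] [IsFractionRing R F]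
    (x y : R) (hy : y ≠ 0)
    (hm : IsLocalRing.maximalIdeal R = Ideal.span {x, y})
    (a b : R) (ha : a ∈ IsLocalRing.maximalIdeal R)
    (hb : b ∈ (IsLocalRing.maximalIdeal R) ^ 2)
    (R' : Subalgebra R F)
    (hR' : R' = Algebra.adjoin R {algebraMap R F x / algebraMap R F y}) :
    algebraMap R F a / algebraMap R F y ∈ R' ∧
    algebraMap R F b / (algebraMap R F y) ^ 2 ∈ R' ∧
    ∀ (E : Type*) [CommRing E] [IsDomain E] [Algebra F E] (z : E),
      z ^ 2 + algebraMap F E (algebraMap R F a) * z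
          + algebraMap F E (algebraMap R F b) = 0 →
      letI : Algebra R' E := ((algebraMap F E).comp (algebraMap R' F)).toAlgebra
      (z * algebraMap F E (algebraMap R F y)⁻¹) ^ 2
          + algebraMap F E (algebraMap R F a / algebraMap R F y)
            * (z * algebraMap F E (algebraMap R F y)⁻¹)
          + algebraMap F E (algebraMap R F b / (algebraMap R F y) ^ 2) = 0 ∧
        IsIntegral R' (z * algebraMap F E (algebraMap R F y)⁻¹) := by
  have hyF : algebraMap R F y ≠ 0 := by
    simpa [IsFractionRing.to_map_eq_zero_iff] using hy
  -- main membership lemma: c ∈ m → c/y ∈ R'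
  have key : ∀ c ∈ IsLocalRing.maximalIdeal R,
      algebraMap R F c / algebraMap R F y ∈ R' := by
    intro c hc
    rw [hm, Ideal.mem_span_pair] at hc
    obtain ⟨r, s, hrs⟩ := hc
    have hcF : algebraMap R F c
        = algebraMap R F r * algebraMap R F x + algebraMap R F s * algebraMap R F y := by
      rw [← hrs]; push_cast [map_add, map_mul]; ring
    have : algebraMap R F c / algebraMap R F y
        = algebraMap R F r * (algebraMap R F x / algebraMap R F y) + algebraMap R F s := by
      rw [hcF]; field_simp
    rw [this]
    exact add_mem (mul_mem (R'.algebraMap_mem r)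
      (by rw [hR']; exact Algebra.self_mem_adjoin_singleton R _))
      (R'.algebraMap_mem s)
  have hA := key a ha
  have hB : algebraMap R F b / (algebraMap R F y) ^ 2 ∈ R' := by
    rw [pow_two] at hb
    refine Submodule.mul_induction_on hb ?_ ?_
    · intro c hc d hd
      have : algebraMap R F (c * d) / (algebraMap R F y) ^ 2
          = (algebraMap R F c / algebraMap R F y) * (algebraMap R F d / algebraMap R F y) := by
        rw [map_mul, div_mul_div_comm, pow_two]
      rw [this]
      exact mul_mem (key c hc) (key d hd)
    · intro u v hu hv
      have : algebraMap R F (u + v) / (algebraMap R F y) ^ 2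
          = algebraMap R F u / (algebraMap R F y) ^ 2
            + algebraMap R F v / (algebraMap R F y) ^ 2 := by
        rw [map_add, add_div]
      rw [this]; exact add_mem hu hv
  refine ⟨hA, hB, ?_⟩
  intro E _ _ _ z hz
  letI : Algebra R' E := ((algebraMap F E).comp (algebraMap R' F)).toAlgebra
  set Y : E := algebraMap F E (algebraMap R F y) with hYdef
  set w : E := z * algebraMap F E (algebraMap R F y)⁻¹ with hwdef
  have hYE : algebraMap F E (algebraMap R F y)⁻¹ * Y = 1 := by
    rw [hYdef, ← map_mul, inv_mul_cancel₀ hyF, map_one]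
  have h1 : w * Y = z := by
    rw [hwdef, mul_assoc, hYE, mul_one]
  have h2 : algebraMap F E (algebraMap R F a / algebraMap R F y) * Y
      = algebraMap F E (algebraMap R F a) := by
    rw [hYdef, ← map_mul, div_mul_cancel₀ _ hyF]
  have h3 : algebraMap F E (algebraMap R F b / (algebraMap R F y) ^ 2) * Y ^ 2
      = algebraMap F E (algebraMap R F b) := by
    rw [hYdef, ← map_pow (algebraMap F E), ← map_mul, div_mul_cancel₀ _ (pow_ne_zero 2 hyF)]
  have hYne : Y ≠ 0 := by
    rw [hYdef]
    exact fun h => hyF ((algebraMap F E).injective (by simpa using h))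
  have hmain : w ^ 2 + algebraMap F E (algebraMap R F a / algebraMap R F y) * w
      + algebraMap F E (algebraMap R F b / (algebraMap R F y) ^ 2) = 0 := by
    have hmul : (w ^ 2 + algebraMap F E (algebraMap R F a / algebraMap R F y) * w
        + algebraMap F E (algebraMap R F b / (algebraMap R F y) ^ 2)) * Y ^ 2 = 0 := by
      have : (w ^ 2 + algebraMap F E (algebraMap R F a / algebraMap R F y) * w
          + algebraMap F E (algebraMap R F b / (algebraMap R F y) ^ 2)) * Y ^ 2
          = (w * Y) ^ 2
            + (algebraMap F E (algebraMap R F a / algebraMap R F y) * Y) * (w * Y)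
            + algebraMap F E (algebraMap R F b / (algebraMap R F y) ^ 2) * Y ^ 2 := by
        ring
      rw [this, h1, h2, h3]
      exact hz
    rcases mul_eq_zero.mp hmul with h | h
    · exact h
    · exact absurd h (pow_ne_zero 2 hYne)
  refine ⟨hmain, ?_⟩
  refine ⟨Polynomial.X ^ 2
      + Polynomial.C (⟨_, hA⟩ : R') * Polynomial.X
      + Polynomial.C (⟨_, hB⟩ : R'), ?_, ?_⟩
  · monicity!
  · have halg : ∀ c : R', algebraMap R' E c = algebraMap F E (c : F) := fun c => rfl
    simp only [Polynomial.eval₂_add, Polynomial.eval₂_mul, Polynomial.eval₂_pow,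
      Polynomial.eval₂_X, Polynomial.eval₂_C]
    rw [halg, halg]
    exact hmain
end
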